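/- arXiv:math/0507366 — 8 statements merged into one kernel-verified Lean document; each statement's English description precedes it below -/
import Mathlib

section
/- If Γ is a residually solvable group and its abelianization Γ/[Γ,Γ] is directly indecomposable, then Γ is directly indecomposable. -/
/-!
Write `Γ` as an internal direct product of normal subgroups `N₁, N₂`. Modulo `N₂` the
commutator subgroup of `Γ` is that of `N₁`, so by the modular law
`([Γ, Γ] ⊔ N₂) ⊓ N₁ = [N₁, N₁]`. Hence the images of `N₁` and `N₂` split the abelianization as
a direct product, and if the image of `N₁` is trivial then `N₁ ≤ [Γ, Γ]` forces `N₁` to be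
perfect. A perfect subgroup lies in every term of the derived series, hence in every normal
subgroup with solvable quotient, so it is trivial in a residually solvable group.
-/

section

variable {G : Type*} [Group G]

theorem Subgroup.le_derivedSeries_of_le_commutator {H : Subgroup G} (hH : H ≤ ⁅H, H⁆) (n : ℕ) :
    H ≤ derivedSeries G n := by
  induction n with
  | zero => exact le_top
  | succ n ih => exact hH.trans (commutator_mono ih ih)

theorem Subgroup.le_of_le_commutator_of_isSolvable {H N : Subgroup G} [N.Normal]
    [Group.IsSolvable (G ⧸ N)] (hH : H ≤ ⁅H, H⁆) : H ≤ N := by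
  obtain ⟨n, hn⟩ := Group.IsSolvable.solvable (G := G ⧸ N)
  rw [← QuotientGroup.ker_mk' N, ← Subgroup.map_eq_bot_iff, eq_bot_iff, ← hn]
  exact (map_mono (le_derivedSeries_of_le_commutator hH n)).trans
    (map_derivedSeries_le_derivedSeries _ n)

theorem Subgroup.sup_inf_assoc_of_le_of_normal {H K : Subgroup G} (N : Subgroup G) [N.Normal]
    (h : H ≤ K) : (H ⊔ N) ⊓ K = H ⊔ N ⊓ K := by
  refine le_antisymm (fun x ⟨hx, hxK⟩ ↦ ?_)
    (sup_le (le_inf le_sup_left h) (inf_le_inf_right K le_sup_right))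
  obtain ⟨y, hy, z, hz, rfl⟩ := mem_sup_of_normal_right.mp hx
  exact mul_mem_sup hy ⟨hz, by simpa using K.mul_mem (K.inv_mem (h hy)) hxK⟩

theorem commutator_sup_eq_of_sup_eq_top {N₁ N₂ : Subgroup G} [N₂.Normal]
    (hsup : N₁ ⊔ N₂ = ⊤) : commutator G ⊔ N₂ = ⁅N₁, N₁⁆ ⊔ N₂ := by
  have hmap : N₁.map (QuotientGroup.mk' N₂) = (⊤ : Subgroup G).map (QuotientGroup.mk' N₂) := by
    rw [← hsup, Subgroup.map_sup, (Subgroup.map_eq_bot_iff _).mpr (QuotientGroup.ker_mk' N₂).ge,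
      sup_bot_eq]
  rw [← QuotientGroup.ker_mk' N₂, ← Subgroup.comap_map_eq, ← Subgroup.comap_map_eq,
    commutator_def, Subgroup.map_commutator, Subgroup.map_commutator, hmap]

theorem commutator_sup_inf_eq_commutator {N₁ N₂ : Subgroup G} [N₂.Normal]
    (hinf : N₁ ⊓ N₂ = ⊥) (hsup : N₁ ⊔ N₂ = ⊤) :
    (commutator G ⊔ N₂) ⊓ N₁ = ⁅N₁, N₁⁆ := by
  rw [commutator_sup_eq_of_sup_eq_top hsup,
    Subgroup.sup_inf_assoc_of_le_of_normal N₂ (Subgroup.commutator_le_self N₁), inf_comm, hinf,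
    sup_bot_eq]

namespace Abelianization

theorem map_of_inf_map_of_eq_bot {N₁ N₂ : Subgroup G} [N₂.Normal]
    (hinf : N₁ ⊓ N₂ = ⊥) (hsup : N₁ ⊔ N₂ = ⊤) : N₁.map of ⊓ N₂.map of = ⊥ := by
  rw [eq_bot_iff]
  rintro _ ⟨⟨n₁, hn₁, rfl⟩, n₂, hn₂, h⟩
  have hquot : n₁ * n₂⁻¹ ∈ commutator G := by
    rw [← ker_of, MonoidHom.mem_ker, map_mul, map_inv, h, mul_inv_cancel]
  have hn₁' : n₁ ∈ (commutator G ⊔ N₂) ⊓ N₁ :=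
    ⟨by simpa using Subgroup.mul_mem_sup hquot hn₂, hn₁⟩
  rw [commutator_sup_inf_eq_commutator hinf hsup] at hn₁'
  exact (ker_of G).ge (Subgroup.commutator_mono le_top le_top hn₁')

theorem le_commutator_of_map_of_eq_bot {N₁ N₂ : Subgroup G} [N₂.Normal]
    (hinf : N₁ ⊓ N₂ = ⊥) (hsup : N₁ ⊔ N₂ = ⊤) (h : N₁.map of = ⊥) : N₁ ≤ ⁅N₁, N₁⁆ := by
  rw [← commutator_sup_inf_eq_commutator hinf hsup]
  exact le_inf (((Subgroup.map_eq_bot_iff _).mp h).trans ((ker_of G).le.trans le_sup_left)) le_rfl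

end Abelianization

end

theorem residually_solvable_indecomposable {Γ : Type*} [Group Γ]
    (hres : ∀ γ : Γ, γ ≠ 1 → ∃ N : Subgroup Γ, N.Normal ∧
      (∀ _ : N.Normal, IsSolvable (Γ ⧸ N)) ∧ γ ∉ N)
    (habnt : Nontrivial (Abelianization Γ))
    (hind : ∀ A B : Subgroup (Abelianization Γ), A ⊓ B = ⊥ → A ⊔ B = ⊤ → A = ⊥ ∨ B = ⊥) :
    Nontrivial Γ ∧
    ∀ N₁ N₂ : Subgroup Γ, N₁.Normal → N₂.Normal →
      N₁ ⊓ N₂ = ⊥ → N₁ ⊔ N₂ = ⊤ → N₁ = ⊥ ∨ N₂ = ⊥ := by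
  have perfect_eq_bot (H : Subgroup Γ) (hH : H ≤ ⁅H, H⁆) : H = ⊥ := by
    refine (Subgroup.eq_bot_iff_forall H).2 fun γ hγ ↦ by_contra fun hγ₁ ↦ ?_
    obtain ⟨N, hN, hsol, hγN⟩ := hres γ hγ₁
    have : Group.IsSolvable (Γ ⧸ N) := hsol hN
    exact hγN (Subgroup.le_of_le_commutator_of_isSolvable hH hγ)
  have of_surjective : Function.Surjective (Abelianization.of : Γ →* _) :=
    QuotientGroup.mk_surjective
  refine ⟨of_surjective.nontrivial, fun N₁ N₂ _ _ hinf hsup ↦ ?_⟩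
  have hsup_of : N₁.map Abelianization.of ⊔ N₂.map Abelianization.of = ⊤ := by
    rw [← Subgroup.map_sup, hsup, Subgroup.map_top_of_surjective _ of_surjective]
  rcases hind _ _ (Abelianization.map_of_inf_map_of_eq_bot hinf hsup) hsup_of with h | h
  · exact .inl (perfect_eq_bot _ (Abelianization.le_commutator_of_map_of_eq_bot hinf hsup h))
  · exact .inr (perfect_eq_bot _ (Abelianization.le_commutator_of_map_of_eq_bot
      (by rwa [inf_comm]) (by rwa [sup_comm]) h))
end

section
/- The fundamental group of the Klein bottle, Γ = ⟨x, y | x y x⁻¹ = y⁻¹⟩, is directly indecomposable. -/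
/-!
`Γ` is the semidirect product `ℤ ⋊ ℤ` in which `x` acts on `⟨y⟩` by inversion. In this model one
reads off that `Γ` is torsion-free, that every commutator is a power of `y` and that every central
element is a power of `x ^ 2`.

Let `Γ ≅ G₁ × G₂`. In a torsion-free group two subgroups meeting trivially cannot both contain
nontrivial powers of one element `g`: if `g ^ s` and `g ^ t` lie in them, so does `g ^ (s * t)`.
If neither factor were abelian, both would contain nontrivial commutators, i.e. nontrivial powers
of `y`. If `G₂` is abelian, it is central, hence consists of even powers of `x`. In particular the
`G₂`-component of `x` is some `x ^ (2 * m)`, so `G₁` contains `x ^ (1 - 2 * m)`, an odd and hence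
nontrivial power of `x`; this forces `G₂` to be trivial.
-/

def kleinRels : Set (FreeGroup (Fin 2)) :=
  {FreeGroup.of 0 * FreeGroup.of 1 * (FreeGroup.of 0)⁻¹ * FreeGroup.of 1}

open Subgroup
open scoped commutatorElement

theorem SemiconjBy.zpow_zpow_negOnePow {G : Type*} [Group G] {x y : G} (h : SemiconjBy x y y⁻¹)
    (b c : ℤ) : SemiconjBy (x ^ b) (y ^ c) (y ^ (b.negOnePow * c)) := by
  have h_neg (c : ℤ) : SemiconjBy x (y ^ c) (y ^ (-c)) := by
    simpa using h.zpow_right c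
  induction b using Int.induction_on generalizing c with
  | zero => simp
  | succ n ih =>
    have hexp : ((n + 1 : ℤ).negOnePow : ℤ) * c = (n : ℤ).negOnePow * -c := by
      rw [Int.negOnePow_succ]; push_cast; ring
    rw [zpow_add_one, hexp]
    exact (ih (-c)).mul_left (h_neg c)
  | pred n ih =>
    have hexp : ((-n - 1 : ℤ).negOnePow : ℤ) * c = (-n : ℤ).negOnePow * -c := by
      rw [Int.negOnePow_sub, Int.negOnePow_one]; push_cast; ring
    rw [zpow_sub_one, hexp]
    exact (ih (-c)).mul_left (by simpa using (h_neg (-c)).inv_symm_left)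

section DirectProduct

variable {G G₁ G₂ : Type*} [Group G] [Group G₁] [Group G₂]

theorem zpow_eq_one_of_snd_eq_one_of_fst_eq_one (htf : ∀ g : G, IsOfFinOrder g → g = 1)
    (e : G ≃* G₁ × G₂) {g : G} {s t : ℤ} (hs : s ≠ 0)
    (hs₂ : (e (g ^ s)).2 = 1) (ht₁ : (e (g ^ t)).1 = 1) : g ^ t = 1 := by
  rcases eq_or_ne t 0 with rfl | ht
  · exact zpow_zero g
  have hst : g ^ (s * t) = 1 := by
    refine e.injective (Prod.ext ?_ ?_)
    · rw [mul_comm, zpow_mul, map_zpow, Prod.pow_fst, ht₁, one_zpow, map_one, Prod.fst_one]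
    · rw [zpow_mul, map_zpow, Prod.pow_snd, hs₂, one_zpow, map_one, Prod.snd_one]
  rw [htf g (isOfFinOrder_iff_zpow_eq_one.2 ⟨_, mul_ne_zero hs ht, hst⟩), one_zpow]

theorem forall_commute_or_forall_commute_of_commutator_mem_zpowers
    (htf : ∀ g : G, IsOfFinOrder g → g = 1) {y : G} (hy : ∀ a b : G, ⁅a, b⁆ ∈ zpowers y)
    (e : G ≃* G₁ × G₂) : (∀ u v : G₁, Commute u v) ∨ (∀ w z : G₂, Commute w z) := by
  by_contra! ⟨⟨u, v, huv⟩, ⟨w, z, hwz⟩⟩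
  obtain ⟨s, hs⟩ := mem_zpowers_iff.1 (hy (e.symm (u, 1)) (e.symm (v, 1)))
  obtain ⟨t, ht⟩ := mem_zpowers_iff.1 (hy (e.symm (1, w)) (e.symm (1, z)))
  replace hs : e (y ^ s) = (⁅u, v⁆, 1) := by simp [hs, commutatorElement_def]
  replace ht : e (y ^ t) = (1, ⁅w, z⁆) := by simp [ht, commutatorElement_def]
  have hs0 : s ≠ 0 := by
    rintro rfl
    rw [zpow_zero, map_one] at hs
    exact huv (commutatorElement_eq_one_iff_commute.1 (congrArg Prod.fst hs).symm)
  have hyt := zpow_eq_one_of_snd_eq_one_of_fst_eq_one htf e hs0 (by rw [hs]) (by rw [ht])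
  rw [hyt, map_one] at ht
  exact hwz (commutatorElement_eq_one_iff_commute.1 (congrArg Prod.snd ht).symm)

theorem subsingleton_of_forall_commute_of_center_le_zpowers_sq
    (htf : ∀ g : G, IsOfFinOrder g → g = 1) {x : G} (hx : center G ≤ zpowers (x ^ 2))
    (e : G ≃* G₁ × G₂) (h₂ : ∀ w z : G₂, Commute w z) : Subsingleton G₂ := by
  have h_even_pow : ∀ w : G₂, ∃ k : ℤ, e (x ^ (2 * k)) = (1, w) := by
    intro w
    have h_center : e.symm (1, w) ∈ center G := mem_center_iff.2 fun g ↦ e.injective <| by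
      simp only [map_mul, MulEquiv.apply_symm_apply]
      exact Prod.ext (by simp) (by simp [(h₂ _ _).eq])
    obtain ⟨k, hk⟩ := mem_zpowers_iff.1 (hx h_center)
    exact ⟨k, by rw [zpow_mul, zpow_two, ← sq, hk, MulEquiv.apply_symm_apply]⟩
  refine subsingleton_of_forall_eq 1 fun w ↦ ?_
  obtain ⟨k, hk⟩ := h_even_pow w
  obtain ⟨m, hm⟩ := h_even_pow (e x).2
  have h_snd : (e (x ^ (1 - 2 * m))).2 = 1 := by simp [zpow_sub, hm]
  have hk_one := zpow_eq_one_of_snd_eq_one_of_fst_eq_one htf e (by omega) h_snd (by rw [hk])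
  simpa [hk_one] using hk.symm

theorem subsingleton_or_subsingleton_of_mulEquiv_prod (htf : ∀ g : G, IsOfFinOrder g → g = 1)
    {x y : G} (hx : center G ≤ zpowers (x ^ 2)) (hy : ∀ a b : G, ⁅a, b⁆ ∈ zpowers y)
    (e : G ≃* G₁ × G₂) : Subsingleton G₁ ∨ Subsingleton G₂ :=
  (forall_commute_or_forall_commute_of_commutator_mem_zpowers htf hy e).imp
    (subsingleton_of_forall_commute_of_center_le_zpowers_sq htf hx (e.trans MulEquiv.prodComm))
    (subsingleton_of_forall_commute_of_center_le_zpowers_sq htf hx e)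

end DirectProduct

theorem kleinRels_semiconjBy :
    SemiconjBy (PresentedGroup.of 0 : PresentedGroup kleinRels) (.of 1) (.of 1)⁻¹ := by
  have hrel : (PresentedGroup.of 0 * PresentedGroup.of 1 * (PresentedGroup.of 0)⁻¹ *
      PresentedGroup.of 1 : PresentedGroup kleinRels) = 1 :=
    PresentedGroup.one_of_mem (Set.mem_singleton _)
  exact mul_inv_eq_iff_eq_mul.1 (eq_inv_of_mul_eq_one_left hrel)

/-- `⟨a, b⟩` stands for `y ^ a * x ^ b`; the multiplication comes from
`x ^ b * y ^ c = y ^ ((-1) ^ b * c) * x ^ b`. -/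
@[ext]
structure KleinModel where
  a : ℤ
  b : ℤ

namespace KleinModel

instance : Mul KleinModel := ⟨fun g h ↦ ⟨g.a + g.b.negOnePow * h.a, g.b + h.b⟩⟩
instance : One KleinModel := ⟨⟨0, 0⟩⟩
instance : Inv KleinModel := ⟨fun g ↦ ⟨-(g.b.negOnePow * g.a), -g.b⟩⟩

@[simp] theorem mul_a (g h : KleinModel) : (g * h).a = g.a + g.b.negOnePow * h.a := rfl
@[simp] theorem mul_b (g h : KleinModel) : (g * h).b = g.b + h.b := rfl
@[simp] theorem one_a : (1 : KleinModel).a = 0 := rfl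
@[simp] theorem one_b : (1 : KleinModel).b = 0 := rfl
@[simp] theorem inv_a (g : KleinModel) : g⁻¹.a = -(g.b.negOnePow * g.a) := rfl
@[simp] theorem inv_b (g : KleinModel) : g⁻¹.b = -g.b := rfl

instance : Group KleinModel where
  mul_assoc g h k := by ext <;> simp [Int.negOnePow_add] <;> ring
  one_mul g := by ext <;> simp
  mul_one g := by ext <;> simp
  inv_mul_cancel g := by ext <;> simp [Int.negOnePow_neg]

instance : Nontrivial KleinModel := ⟨⟨⟨1, 0⟩, 1, by simp [KleinModel.ext_iff]⟩⟩

@[simp] theorem zpow_b (g : KleinModel) (n : ℤ) : (g ^ n).b = n * g.b := by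
  induction n using Int.induction_on with
  | zero => simp
  | succ n ih => rw [zpow_add_one, mul_b, ih]; ring
  | pred n ih => rw [zpow_sub_one, mul_b, inv_b, ih]; ring

theorem mk_zero_zpow (a n : ℤ) : (⟨a, 0⟩ : KleinModel) ^ n = ⟨n * a, 0⟩ := by
  induction n using Int.induction_on with
  | zero => ext <;> simp
  | succ n ih => ext <;> simp [zpow_add_one, ih]; ring
  | pred n ih => ext <;> simp [zpow_sub_one, ih]; ring

theorem zero_mk_zpow (b n : ℤ) : (⟨0, b⟩ : KleinModel) ^ n = ⟨0, n * b⟩ := by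
  ext
  · induction n using Int.induction_on with
    | zero => rfl
    | succ n ih => rw [zpow_add_one, mul_a, ih]; simp
    | pred n ih => rw [zpow_sub_one, mul_a, inv_a, ih]; simp
  · simp

theorem eq_one_of_isOfFinOrder (g : KleinModel) (hg : IsOfFinOrder g) : g = 1 := by
  obtain ⟨n, hn, hgn⟩ := isOfFinOrder_iff_zpow_eq_one.1 hg
  have hb : g.b = 0 := by simpa [hn] using congrArg b hgn
  have hg' : g = ⟨g.a, 0⟩ := by ext <;> simp [hb]
  rw [hg', mk_zero_zpow] at hgn
  have ha : g.a = 0 := by simpa [hn] using congrArg a hgn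
  ext <;> simp [ha, hb]

theorem commutator_mem_zpowers (g h : KleinModel) : ⁅g, h⁆ ∈ zpowers ⟨1, 0⟩ :=
  mem_zpowers_iff.2 ⟨⁅g, h⁆.a, by ext <;> simp [mk_zero_zpow, commutatorElement_def]⟩

theorem center_le_zpowers : center KleinModel ≤ zpowers (⟨0, 1⟩ ^ 2) := by
  intro g hg
  have hx := congrArg a ((mem_center_iff.1 hg) ⟨0, 1⟩)
  have hy := congrArg a ((mem_center_iff.1 hg) ⟨1, 0⟩)
  simp only [mul_a, Int.negOnePow_zero, Int.negOnePow_one, Units.val_neg, Units.val_one,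
    mul_zero, add_zero, zero_add, mul_one, neg_mul, one_mul] at hx hy
  have ha : g.a = 0 := by omega
  obtain ⟨k, hk⟩ : Even g.b :=
    (Int.negOnePow_eq_one_iff _).1 (Units.ext (by rw [Units.val_one]; omega))
  refine mem_zpowers_iff.2 ⟨k, ?_⟩
  rw [← zpow_natCast, zero_mk_zpow, zero_mk_zpow]
  ext <;> simp [ha, hk, mul_two]

def ofPresentedGroup : PresentedGroup kleinRels →* KleinModel :=
  PresentedGroup.toGroup (f := ![⟨0, 1⟩, ⟨1, 0⟩]) <| by
    rintro r rfl
    ext <;> simp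

def toPresentedGroup : KleinModel →* PresentedGroup kleinRels :=
  MonoidHom.mk' (fun g ↦ .of 1 ^ g.a * .of 0 ^ g.b) fun g h ↦ by
    have h_swap := (kleinRels_semiconjBy.zpow_zpow_negOnePow g.b h.a).eq
    simp only [mul_a, mul_b, zpow_add, mul_assoc]
    rw [← mul_assoc (_ ^ g.b), h_swap, mul_assoc]

def mulEquivPresentedGroup : PresentedGroup kleinRels ≃* KleinModel :=
  MonoidHom.toMulEquiv ofPresentedGroup toPresentedGroup
    (PresentedGroup.ext fun i ↦ by fin_cases i <;> simp [ofPresentedGroup, toPresentedGroup])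
    (MonoidHom.ext fun g ↦ by
      ext <;> simp [ofPresentedGroup, toPresentedGroup, mk_zero_zpow, zero_mk_zpow])

end KleinModel

theorem klein_bottle_group_indecomposable :
    Nontrivial (PresentedGroup kleinRels) ∧
    ∀ (G₁ G₂ : Type) [Group G₁] [Group G₂],
      (PresentedGroup kleinRels ≃* G₁ × G₂) → Subsingleton G₁ ∨ Subsingleton G₂ := by
  refine ⟨KleinModel.mulEquivPresentedGroup.toEquiv.nontrivial, fun G₁ G₂ _ _ e ↦ ?_⟩
  exact subsingleton_or_subsingleton_of_mulEquiv_prod KleinModel.eq_one_of_isOfFinOrder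
    KleinModel.center_le_zpowers KleinModel.commutator_mem_zpowers
    (KleinModel.mulEquivPresentedGroup.symm.trans e)
end

section
/- Let Γ be a group with a normal abelian subgroup T such that: (i) T ≅ ℤ^d for some d ≥ 1; (ii) the conjugation action of Γ/T on T is faithful; (iii) the induced representation of Γ/T on T ⊗ ℚ ≅ ℚ^d is irreducible. Then Γ is directly indecomposable. -/
theorem prop1_indecomposable {Γ : Type*} [Group Γ] (d : ℕ) (hd : 1 ≤ d)
    (T : Subgroup Γ) (hTn : T.Normal)
    (e : T ≃* Multiplicative (Fin d → ℤ))
    (ρ : Γ →* LinearMap.GeneralLinearGroup ℚ (Fin d → ℚ))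
    (hcompat : ∀ (g : Γ) (t : T),
      ((ρ g : (Fin d → ℚ) →ₗ[ℚ] (Fin d → ℚ)) (fun i => ((Multiplicative.toAdd (e t)) i : ℚ)))
        = fun i => ((Multiplicative.toAdd (e ⟨g * (t : Γ) * g⁻¹, hTn.conj_mem _ t.2 g⟩)) i : ℚ))
    (hfaith : ρ.ker = T)
    (hirr : ∀ U : Submodule ℚ (Fin d → ℚ),
      (∀ g : Γ, ∀ u ∈ U, (ρ g : (Fin d → ℚ) →ₗ[ℚ] (Fin d → ℚ)) u ∈ U) → U = ⊥ ∨ U = ⊤) :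
    Nontrivial Γ ∧
    ∀ N₁ N₂ : Subgroup Γ, N₁.Normal → N₂.Normal →
      N₁ ⊓ N₂ = ⊥ → N₁ ⊔ N₂ = ⊤ → N₁ = ⊥ ∨ N₂ = ⊥ := by
  classical
  set w : T → (Fin d → ℤ) := fun t => Multiplicative.toAdd (e t) with hw
  set v : T → (Fin d → ℚ) := fun t => fun i => ((w t i : ℤ) : ℚ) with hv
  have hcompat' : ∀ (g : Γ) (t : T),
      (ρ g : (Fin d → ℚ) →ₗ[ℚ] (Fin d → ℚ)) (v t)
        = v ⟨g * (t : Γ) * g⁻¹, hTn.conj_mem _ t.2 g⟩ := fun g t => hcompat g t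
  have hwinj : Function.Injective w := fun a b h => e.injective (Multiplicative.toAdd.injective h)
  have hvinj : Function.Injective v := by
    intro a b h
    apply hwinj
    funext i
    have h2 := congrFun h i
    simp only [hv] at h2
    exact_mod_cast h2
  have hv1 : v 1 = 0 := by
    funext i
    simp [hv, hw]
  have hvne : ∀ t : T, t ≠ 1 → v t ≠ 0 := by
    intro t ht h0
    exact ht (hvinj (h0.trans hv1.symm))
  have hvpow : ∀ (t : T) (m : ℕ), v (t ^ m) = (m : ℚ) • v t := by
    intro t m
    funext i
    simp only [hv, hw, map_pow, toAdd_pow, Pi.smul_apply, smul_eq_mul]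
    rw [nsmul_eq_mul]
    push_cast
    ring
  -- the images of v span everything
  have hsingle : ∀ i : Fin d, Pi.single i (1 : ℚ) ∈ Submodule.span ℚ (Set.range v) := by
    intro i
    apply Submodule.subset_span
    refine ⟨e.symm (Multiplicative.ofAdd (Pi.single i (1 : ℤ))), ?_⟩
    funext j
    simp only [hv, hw, MulEquiv.apply_symm_apply, toAdd_ofAdd]
    rcases eq_or_ne j i with rfl | hne
    · simp
    · simp [Pi.single_apply, hne]
  have hspan : Submodule.span ℚ (Set.range v) = ⊤ := by
    rw [eq_top_iff, ← (Pi.basisFun ℚ (Fin d)).span_eq, Submodule.span_le]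
    rintro x ⟨i, rfl⟩
    simpa using hsingle i
  -- centralizer of T is T
  have hcent : ∀ g : Γ, (∀ t : T, g * (t : Γ) * g⁻¹ = (t : Γ)) → g ∈ T := by
    intro g hg
    have h1 : (ρ g : (Fin d → ℚ) →ₗ[ℚ] (Fin d → ℚ)) = LinearMap.id := by
      apply LinearMap.ext_on hspan
      rintro x ⟨t, rfl⟩
      rw [hcompat' g t]
      have heq : (⟨g * (t : Γ) * g⁻¹, hTn.conj_mem _ t.2 g⟩ : T) = t := Subtype.ext (hg t)
      rw [heq]
      rfl
    rw [← hfaith]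
    exact Units.ext h1
  -- invariant subspace attached to a normal subgroup
  have hinv : ∀ N : Subgroup Γ, N.Normal →
      ∀ g : Γ, ∀ u ∈ Submodule.span ℚ (v '' {t : T | (t : Γ) ∈ N}),
        (ρ g : (Fin d → ℚ) →ₗ[ℚ] (Fin d → ℚ)) u ∈
          Submodule.span ℚ (v '' {t : T | (t : Γ) ∈ N}) := by
    intro N hN g u hu
    have hmap : Submodule.map (ρ g : (Fin d → ℚ) →ₗ[ℚ] (Fin d → ℚ))
        (Submodule.span ℚ (v '' {t : T | (t : Γ) ∈ N}))
        ≤ Submodule.span ℚ (v '' {t : T | (t : Γ) ∈ N}) := by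
      rw [Submodule.map_span, Submodule.span_le]
      rintro x ⟨y, ⟨t, ht, rfl⟩, rfl⟩
      apply Submodule.subset_span
      exact ⟨⟨g * (t : Γ) * g⁻¹, hTn.conj_mem _ t.2 g⟩, hN.conj_mem _ ht g, (hcompat' g t).symm⟩
    exact hmap ⟨u, hu, rfl⟩
  -- a normal subgroup whose span is ⊥ is trivial
  have hbotcase : ∀ N : Subgroup Γ, N.Normal →
      Submodule.span ℚ (v '' {t : T | (t : Γ) ∈ N}) = ⊥ → N = ⊥ := by
    intro N hN hUbot
    have key : ∀ t : T, (t : Γ) ∈ N → t = 1 := by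
      intro t ht
      apply hvinj
      rw [hv1]
      have : v t ∈ Submodule.span ℚ (v '' {t : T | (t : Γ) ∈ N}) :=
        Submodule.subset_span ⟨t, ht, rfl⟩
      rwa [hUbot, Submodule.mem_bot] at this
    rw [eq_bot_iff]
    intro n hn
    have hnT : n ∈ T := by
      apply hcent
      intro t
      have hcmem : n * (t : Γ) * n⁻¹ * (t : Γ)⁻¹ ∈ T := by
        have h1 : n * (t : Γ) * n⁻¹ ∈ T := hTn.conj_mem _ t.2 n
        exact T.mul_mem h1 (T.inv_mem t.2)
      have hcmemN : n * (t : Γ) * n⁻¹ * (t : Γ)⁻¹ ∈ N := by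
        have h2 : (t : Γ) * n⁻¹ * (t : Γ)⁻¹ ∈ N := hN.conj_mem _ (N.inv_mem hn) t
        have := N.mul_mem hn h2
        simpa [mul_assoc] using this
      have := key ⟨_, hcmem⟩ hcmemN
      have h3 : n * (t : Γ) * n⁻¹ * (t : Γ)⁻¹ = 1 := by
        simpa using congrArg Subtype.val this
      exact mul_inv_eq_one.mp h3
    have := key ⟨n, hnT⟩ hn
    simpa [Subgroup.mem_bot] using congrArg Subtype.val this
  constructor
  · -- Nontrivial Γ
    set t0 : T := e.symm (Multiplicative.ofAdd (Pi.single (⟨0, hd⟩ : Fin d) (1 : ℤ))) with ht0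
    refine ⟨(t0 : Γ), 1, fun hc => ?_⟩
    have h1 : t0 = 1 := OneMemClass.coe_eq_one.mp hc
    have h2 := congrArg (fun s : T => Multiplicative.toAdd (e s) (⟨0, hd⟩ : Fin d)) h1
    simp [ht0] at h2
  · intro N₁ N₂ hN₁ hN₂ hinf hsup
    by_contra hcon
    push_neg at hcon
    obtain ⟨hne₁, hne₂⟩ := hcon
    have hdis : Disjoint N₁ N₂ := disjoint_iff.mpr hinf
    rcases hirr _ (hinv N₁ hN₁) with hU₁ | hU₁
    · exact hne₁ (hbotcase N₁ hN₁ hU₁)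
    rcases hirr _ (hinv N₂ hN₂) with hU₂ | hU₂
    · exact hne₂ (hbotcase N₂ hN₂ hU₂)
    -- both spans are ⊤ ; then N₁, N₂ ≤ T
    have hsubT : ∀ N M : Subgroup Γ, N.Normal → M.Normal → Disjoint N M →
        Submodule.span ℚ (v '' {t : T | (t : Γ) ∈ M}) = ⊤ → N ≤ T := by
      intro N M hN hM hd' hU n hn
      have h1 : (ρ n : (Fin d → ℚ) →ₗ[ℚ] (Fin d → ℚ)) = LinearMap.id := by
        apply LinearMap.ext_on hU
        rintro x ⟨t, ht, rfl⟩
        rw [hcompat' n t]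
        have hcm := Subgroup.commute_of_normal_of_disjoint N M hN hM hd' n t hn ht
        have hcomm : n * (t : Γ) * n⁻¹ = (t : Γ) := by
          rw [mul_inv_eq_iff_eq_mul, hcm.eq]
        have heq : (⟨n * (t : Γ) * n⁻¹, hTn.conj_mem _ t.2 n⟩ : T) = t := Subtype.ext hcomm
        rw [heq]
        rfl
      rw [← hfaith]
      exact Units.ext h1
    have h1T : N₁ ≤ T := hsubT N₁ N₂ hN₁ hN₂ hdis hU₂
    have h2T : N₂ ≤ T := hsubT N₂ N₁ hN₂ hN₁ hdis.symm hU₁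
    -- pick a nontrivial element of N₂
    obtain ⟨⟨b, hbN₂⟩, hbne⟩ := Subgroup.ne_bot_iff_exists_ne_one.mp hne₂
    have hbne' : b ≠ 1 := by
      intro hb
      exact hbne (Subtype.ext hb)
    have hbT : b ∈ T := h2T hbN₂
    set bt : T := ⟨b, hbT⟩ with hbt
    have hbt1 : bt ≠ 1 := by
      intro hc
      exact hbne' (congrArg Subtype.val hc)
    -- express v bt as a rational combination of elements of N₁ ∩ T
    have hmemspan : v bt ∈ Submodule.span ℚ (v '' {t : T | (t : Γ) ∈ N₁}) := by
      rw [hU₁]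
      trivial
    rw [Submodule.mem_span_set'] at hmemspan
    obtain ⟨n, f, g, hsum⟩ := hmemspan
    choose t ht hvt using fun i => (g i).2
    -- clear denominators
    set m : ℕ := ∏ i, (f i).den with hm
    have hmpos : 0 < m := Finset.prod_pos fun i _ => (f i).pos
    have hz : ∀ i, ∃ zz : ℤ, (zz : ℚ) = f i * m := by
      intro i
      obtain ⟨k, hk⟩ := Finset.dvd_prod_of_mem (fun i => (f i).den) (Finset.mem_univ i)
      refine ⟨(f i).num * k, ?_⟩
      have hmq : (m : ℚ) = ((f i).den : ℚ) * k := by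
        exact_mod_cast congrArg (fun x : ℕ => (x : ℚ)) (hm.trans hk)
      push_cast
      rw [hmq, ← Rat.mul_den_eq_num]
      ring
    choose z hzq using hz
    have hq : (m : ℚ) • v bt = ∑ i, (z i : ℚ) • v (t i) := by
      rw [← hsum, Finset.smul_sum]
      refine Finset.sum_congr rfl fun i _ => ?_
      rw [hvt i, smul_smul, hzq i, mul_comm]
    have hzint : m • w bt = ∑ i, z i • w (t i) := by
      funext j
      have hqq := congrFun hq j
      simp only [hv, Finset.sum_apply, Pi.smul_apply, smul_eq_mul] at hqq
      simp only [Finset.sum_apply, Pi.smul_apply, smul_eq_mul, nsmul_eq_mul]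
      exact_mod_cast hqq
    -- the additive subgroup of ℤ^d corresponding to N₁ ∩ T
    let A : AddSubgroup (Fin d → ℤ) :=
      { carrier := {x | ((e.symm (Multiplicative.ofAdd x) : T) : Γ) ∈ N₁}
        add_mem' := by
          intro x y hx hy
          have hmul : e.symm (Multiplicative.ofAdd (x + y)) =
              e.symm (Multiplicative.ofAdd x) * e.symm (Multiplicative.ofAdd y) := by
            rw [← map_mul]
            rfl
          simp only [Set.mem_setOf_eq, hmul, Subgroup.coe_mul]
          exact N₁.mul_mem hx hy
        zero_mem' := by
          have h0 : e.symm (Multiplicative.ofAdd (0 : Fin d → ℤ)) = 1 := by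
            rw [show Multiplicative.ofAdd (0 : Fin d → ℤ) = 1 from rfl, map_one]
          simp only [Set.mem_setOf_eq, h0, OneMemClass.coe_one]
          exact N₁.one_mem
        neg_mem' := by
          intro x hx
          have hninv : e.symm (Multiplicative.ofAdd (-x)) =
              (e.symm (Multiplicative.ofAdd x))⁻¹ := by
            rw [← map_inv]
            rfl
          simp only [Set.mem_setOf_eq, hninv, InvMemClass.coe_inv]
          exact N₁.inv_mem hx }
    have htiA : ∀ i, w (t i) ∈ A := by
      intro i
      show ((e.symm (Multiplicative.ofAdd (w (t i))) : T) : Γ) ∈ N₁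
      have : e.symm (Multiplicative.ofAdd (w (t i))) = t i := by
        simp [hw]
      rw [this]
      exact ht i
    have hsummem : m • w bt ∈ A := by
      rw [hzint]
      exact sum_mem fun i _ => zsmul_mem (htiA i) (z i)
    have hpow : e.symm (Multiplicative.ofAdd (m • w bt)) = bt ^ m := by
      apply e.injective
      rw [MulEquiv.apply_symm_apply, map_pow]
      apply Multiplicative.toAdd.injective
      simp [hw, toAdd_pow]
    have hbmN₁ : ((bt ^ m : T) : Γ) ∈ N₁ := by
      have h5 : ((e.symm (Multiplicative.ofAdd (m • w bt)) : T) : Γ) ∈ N₁ := hsummem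
      rwa [hpow] at h5
    have hbmN₂ : ((bt ^ m : T) : Γ) ∈ N₂ := by
      rw [SubgroupClass.coe_pow]
      exact N₂.pow_mem hbN₂ m
    have hmem2 : ((bt ^ m : T) : Γ) ∈ N₁ ⊓ N₂ := ⟨hbmN₁, hbmN₂⟩
    rw [hinf, Subgroup.mem_bot] at hmem2
    have hbm1 : bt ^ m = 1 := OneMemClass.coe_eq_one.mp hmem2
    apply hvne bt hbt1
    have h6 : v (bt ^ m) = 0 := by rw [hbm1, hv1]
    rw [hvpow] at h6
    rcases smul_eq_zero.mp h6 with h | h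
    · exfalso
      have : m = 0 := by exact_mod_cast h
      omega
    · exact h
end

section
/- Under the hypotheses of the preceding setup (T ≅ ℤ^d normal abelian in Γ, faithful Γ/T-action, irreducible rational representation), every normal abelian subgroup N of Γ is contained in T. -/
theorem prop1_normal_abelian_le {Γ : Type*} [Group Γ] (d : ℕ) (hd : 1 ≤ d)
    (T : Subgroup Γ) (hTn : T.Normal)
    (e : T ≃* Multiplicative (Fin d → ℤ))
    (ρ : Γ →* LinearMap.GeneralLinearGroup ℚ (Fin d → ℚ))
    (hcompat : ∀ (g : Γ) (t : T),
      ((ρ g : (Fin d → ℚ) →ₗ[ℚ] (Fin d → ℚ)) (fun i => ((Multiplicative.toAdd (e t)) i : ℚ)))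
        = fun i => ((Multiplicative.toAdd (e ⟨g * (t : Γ) * g⁻¹, hTn.conj_mem _ t.2 g⟩)) i : ℚ))
    (hfaith : ρ.ker = T)
    (hirr : ∀ U : Submodule ℚ (Fin d → ℚ),
      (∀ g : Γ, ∀ u ∈ U, (ρ g : (Fin d → ℚ) →ₗ[ℚ] (Fin d → ℚ)) u ∈ U) → U = ⊥ ∨ U = ⊤)
    (N : Subgroup Γ) (hNn : N.Normal) (hNab : ∀ a ∈ N, ∀ b ∈ N, Commute a b) :
    N ≤ T := by
  classical
  set L : T → (Fin d → ℚ) := fun t => fun i => ((Multiplicative.toAdd (e t)) i : ℚ) with hLdef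
  -- injectivity-type fact
  have hLinj : ∀ t : T, L t = 0 → t = 1 := by
    intro t ht
    have h1 : Multiplicative.toAdd (e t) = 0 := by
      funext i
      have h0 : ((Multiplicative.toAdd (e t) i : ℤ) : ℚ) = 0 := by
        simpa [hLdef] using congrFun ht i
      exact_mod_cast h0
    have h2 : e t = 1 := by
      have := congrArg Multiplicative.ofAdd h1
      simpa using this
    have : e t = e 1 := by simpa using h2
    exact e.injective this
  -- the image of L spans everything
  have hspanT : Submodule.span ℚ (Set.range L) = ⊤ := by
    have hb : Submodule.span ℚ (Set.range (Pi.basisFun ℚ (Fin d))) = ⊤ :=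
      (Pi.basisFun ℚ (Fin d)).span_eq
    rw [eq_top_iff, ← hb]
    apply Submodule.span_le.2
    rintro _ ⟨i, rfl⟩
    apply Submodule.subset_span
    refine ⟨e.symm (Multiplicative.ofAdd (Pi.single i 1)), ?_⟩
    simp only [hLdef]
    rw [MulEquiv.apply_symm_apply]
    funext j
    simp [Pi.basisFun_apply, Pi.single_apply]
  -- key lemma: if ρ n fixes a spanning set, n ∈ T
  have key : ∀ n : Γ, ∀ S : Set (Fin d → ℚ), Submodule.span ℚ S = ⊤ →
      (∀ v ∈ S, (ρ n : (Fin d → ℚ) →ₗ[ℚ] (Fin d → ℚ)) v = v) → n ∈ T := by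
    intro n S hS hfix
    have hker : Submodule.span ℚ S ≤
        LinearMap.ker ((ρ n : (Fin d → ℚ) →ₗ[ℚ] (Fin d → ℚ)) - LinearMap.id) := by
      apply Submodule.span_le.2
      intro v hv
      simp [LinearMap.mem_ker, hfix v hv]
    rw [hS, top_le_iff] at hker
    have heq : (ρ n : (Fin d → ℚ) →ₗ[ℚ] (Fin d → ℚ)) = LinearMap.id := by
      apply LinearMap.ext
      intro v
      have hv : v ∈ LinearMap.ker ((ρ n : (Fin d → ℚ) →ₗ[ℚ] (Fin d → ℚ)) - LinearMap.id) := by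
        rw [hker]; trivial
      have := LinearMap.mem_ker.1 hv
      simpa [sub_eq_zero] using this
    have hmem : n ∈ ρ.ker := by
      rw [MonoidHom.mem_ker]
      refine Units.ext ?_
      rw [Units.val_one, Module.End.one_eq_id]
      exact heq
    rw [hfaith] at hmem
    exact hmem
  -- the invariant subspace
  set S : Set (Fin d → ℚ) := L '' {t : T | (t : Γ) ∈ N} with hSdef
  have hWinv : ∀ g : Γ, ∀ u ∈ Submodule.span ℚ S,
      (ρ g : (Fin d → ℚ) →ₗ[ℚ] (Fin d → ℚ)) u ∈ Submodule.span ℚ S := by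
    intro g u hu
    have hmap : Submodule.map (ρ g : (Fin d → ℚ) →ₗ[ℚ] (Fin d → ℚ)) (Submodule.span ℚ S)
        ≤ Submodule.span ℚ S := by
      rw [Submodule.map_span]
      apply Submodule.span_mono
      rintro _ ⟨_, ⟨t, ht, rfl⟩, rfl⟩
      refine ⟨⟨g * (t : Γ) * g⁻¹, hTn.conj_mem _ t.2 g⟩, hNn.conj_mem _ ht g, ?_⟩
      exact (hcompat g t).symm
    exact hmap ⟨u, hu, rfl⟩
  intro n hn
  rcases hirr (Submodule.span ℚ S) hWinv with hbot | htop
  · -- N ∩ T is trivial; n commutes with every t in T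
    have hNTtriv : ∀ t : T, (t : Γ) ∈ N → t = 1 := by
      intro t ht
      apply hLinj
      have : L t ∈ Submodule.span ℚ S := Submodule.subset_span ⟨t, ht, rfl⟩
      rw [hbot] at this
      simpa using this
    apply key n (Set.range L) hspanT
    rintro _ ⟨t, rfl⟩
    rw [hcompat n t]
    have hc : n * (t : Γ) * n⁻¹ * (t : Γ)⁻¹ = 1 := by
      have hcT : n * (t : Γ) * n⁻¹ * (t : Γ)⁻¹ ∈ T :=
        mul_mem (hTn.conj_mem _ t.2 n) (inv_mem t.2)
      have hcN : n * (t : Γ) * n⁻¹ * (t : Γ)⁻¹ ∈ N := by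
        have h2 : (t : Γ) * n⁻¹ * (t : Γ)⁻¹ ∈ N := hNn.conj_mem _ (inv_mem hn) (t : Γ)
        have : n * ((t : Γ) * n⁻¹ * (t : Γ)⁻¹) ∈ N := mul_mem hn h2
        simpa [mul_assoc] using this
      have := hNTtriv ⟨_, hcT⟩ hcN
      exact Subtype.ext_iff.1 this
    have hconj : n * (t : Γ) * n⁻¹ = (t : Γ) := by
      have := mul_eq_one_iff_eq_inv.1 hc
      simpa using this
    have : (⟨n * (t : Γ) * n⁻¹, hTn.conj_mem _ t.2 n⟩ : T) = t := Subtype.ext hconj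
    rw [this]
  · -- N ∩ T spans; n commutes with N ∩ T since N abelian
    apply key n S htop
    rintro _ ⟨t, ht, rfl⟩
    rw [hcompat n t]
    have hconj : n * (t : Γ) * n⁻¹ = (t : Γ) := by
      have hcomm := hNab n hn (t : Γ) ht
      rw [hcomm.eq]
      group
    have : (⟨n * (t : Γ) * n⁻¹, hTn.conj_mem _ t.2 n⟩ : T) = t := Subtype.ext hconj
    rw [this]
end

section
/- Let G be a group with trivial center, and suppose G = G₁ × ⋯ × Gₙ is an internal direct product of directly indecomposable subgroups. If G = A × B is any internal direct product decomposition, then after renumbering the Gᵢ there is m ∈ {0,…,n} with A = G₁ × ⋯ × G_m and B = G_{m+1} × ⋯ × Gₙ. -/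
/-!
Each factor `Gᵢ` has the complement `Kᵢ = ⨆ j ≠ i, Gⱼ`, and since `Z(G) = 1` the centralizer of
`Kᵢ` is exactly `Gᵢ`. Write `g ∈ Gᵢ` as `g = a * b` along `G = A × B`: conjugation by `Kᵢ` fixes
`g` and preserves `A` and `B`, hence fixes `a` by uniqueness of the decomposition, so `a, b ∈ Gᵢ`
and `Gᵢ = (Gᵢ ⊓ A) ⊔ (Gᵢ ⊓ B)`. Indecomposability puts every `Gᵢ` inside `A` or `B`, and then
`A` and `B` are the joins of the factors they contain.
-/

open Finset in
theorem Fin.exists_perm_apply_iff_val_lt {n : ℕ} (q : Fin n → Prop) :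
    ∃ σ : Equiv.Perm (Fin n), ∃ m ≤ n, ∀ i, q (σ i) ↔ (i : ℕ) < m := by
  classical
  set m := #{i | q i}
  have hmn : m ≤ n := card_le_univ _ |>.trans_eq (card_fin n)
  have hcard : #{i : Fin n | (i : ℕ) < m} = m := by
    rw [Fin.card_filter_val_lt, min_eq_right hmn]
  obtain ⟨σ, hσ⟩ := Equiv.Perm.exists_map_finset_eq _ _ hcard
  refine ⟨σ, m, hmn, fun i => ?_⟩
  have hi := mem_map' σ.toEmbedding (s := {i : Fin n | (i : ℕ) < m}) (a := i)
  rw [hσ] at hi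
  simpa using hi

namespace Subgroup

variable {G : Type*} [Group G]

theorem centralizer_le_of_sup_eq_top (hZ : center G = ⊥) {H K : Subgroup G} [K.Normal]
    (hHK : H ≤ centralizer K) (hsup : H ⊔ K = ⊤) : centralizer K ≤ H := by
  intro c hc
  obtain ⟨h, hh, k, hk, rfl⟩ := mem_sup_of_normal_right.mp (hsup ▸ mem_top c : c ∈ H ⊔ K)
  suffices k ∈ center G by rw [hZ, mem_bot] at this; rwa [this, mul_one]
  rw [mem_center_iff]
  intro y
  obtain ⟨h', hh', k', hk', rfl⟩ := mem_sup_of_normal_right.mp (hsup ▸ mem_top y : y ∈ H ⊔ K)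
  have hkh' : Commute k h' := mem_centralizer_iff.mp (hHK hh') k hk
  have hkk' : Commute k' k := by
    have hhk' : Commute k' h := mem_centralizer_iff.mp (hHK hh) k' hk'
    have hhkk' : Commute k' (h * k) := mem_centralizer_iff.mp hc k' hk'
    simpa using hhk'.inv_right.mul_right hhkk'
  exact (hkh'.symm.mul_left hkk').eq

theorem commute_of_commute_mul {A B : Subgroup G} [hA : A.Normal] [hB : B.Normal]
    (hAB : A ⊓ B = ⊥) {a b x : G} (ha : a ∈ A) (hb : b ∈ B) (hx : Commute x (a * b)) :
    Commute x a := by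
  have hprod : x * a * x⁻¹ * (x * b * x⁻¹) = a * b := by
    calc _ = x * (a * b) * x⁻¹ := by group
      _ = a * b := by rw [hx.eq, mul_inv_cancel_right]
  have hconj : x * a * x⁻¹ = a := by
    have := mul_injective_of_disjoint (disjoint_iff.mpr hAB)
      (a₁ := (⟨x * a * x⁻¹, hA.conj_mem a ha x⟩, ⟨x * b * x⁻¹, hB.conj_mem b hb x⟩))
      (a₂ := (⟨a, ha⟩, ⟨b, hb⟩)) hprod
    simpa using congrArg (fun p => (p.1 : G)) this
  exact mul_inv_eq_iff_eq_mul.mp hconj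

theorem inf_sup_inf_eq_self_of_sup_eq_top (hZ : center G = ⊥) {H K A B : Subgroup G} [K.Normal]
    [A.Normal] [B.Normal] (hHK : H ≤ centralizer K) (hHKsup : H ⊔ K = ⊤) (hAB : A ⊓ B = ⊥)
    (hABsup : A ⊔ B = ⊤) : (H ⊓ A) ⊔ (H ⊓ B) = H := by
  refine le_antisymm (sup_le inf_le_left inf_le_left) fun g hg => ?_
  obtain ⟨a, ha, b, hb, rfl⟩ := mem_sup_of_normal_right.mp (hABsup ▸ mem_top g : g ∈ A ⊔ B)
  have haH : a ∈ H := centralizer_le_of_sup_eq_top hZ hHK hHKsup <|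
    mem_centralizer_iff.mpr fun x hx =>
      (commute_of_commute_mul hAB ha hb (mem_centralizer_iff.mp (hHK hg) x hx)).eq
  have hbH : b ∈ H := by simpa using mul_mem (inv_mem haH) hg
  exact mul_mem_sup ⟨haH, ha⟩ ⟨hbH, hb⟩

theorem le_or_le_of_inf_sup_inf_eq_self {H A B : Subgroup G} [H.Normal] [A.Normal] [B.Normal]
    (hH : ∀ C D : Subgroup G, C ≤ H → D ≤ H → C.Normal → D.Normal → C ⊓ D = ⊥ → C ⊔ D = H →
      C = ⊥ ∨ D = ⊥)
    (hAB : A ⊓ B = ⊥) (hsplit : (H ⊓ A) ⊔ (H ⊓ B) = H) : H ≤ A ∨ H ≤ B := by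
  have hdisj : (H ⊓ A) ⊓ (H ⊓ B) = ⊥ :=
    eq_bot_iff.mpr <| hAB ▸ inf_le_inf inf_le_right inf_le_right
  rcases hH _ _ inf_le_left inf_le_left inferInstance inferInstance hdisj hsplit with h | h
  · right; rw [← hsplit, h, bot_sup_eq]; exact inf_le_right
  · left; rw [← hsplit, h, sup_bot_eq]; exact inf_le_right

theorem eq_of_le_of_le_of_sup_eq_top {A B P Q : Subgroup G} [Q.Normal] (hPA : P ≤ A)
    (hQB : Q ≤ B) (hPQ : P ⊔ Q = ⊤) (hAB : A ⊓ B = ⊥) : A = P := by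
  refine le_antisymm (fun a ha => ?_) hPA
  obtain ⟨u, hu, v, hv, rfl⟩ := mem_sup_of_normal_right.mp (hPQ ▸ mem_top a : a ∈ P ⊔ Q)
  have hvA : v ∈ A := by simpa using mul_mem (inv_mem (hPA hu)) ha
  have hv1 : v = 1 := mem_bot.mp <| hAB ▸ mem_inf.mpr ⟨hvA, hQB hv⟩
  rwa [hv1, mul_one]

end Subgroup

open Subgroup in
theorem prop2_unique_decomposition_general {G : Type*} [Group G]
    (hZ : Subgroup.center G = ⊥) (n : ℕ) (Gs : Fin n → Subgroup G)
    (hnorm : ∀ i, (Gs i).Normal)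
    (hcomm : ∀ i j, i ≠ j → ∀ x ∈ Gs i, ∀ y ∈ Gs j, Commute x y)
    (hgen : (⨆ i, Gs i) = ⊤)
    (hindec : ∀ i, Gs i ≠ ⊥ ∧
      ∀ A B : Subgroup G, A ≤ Gs i → B ≤ Gs i → A.Normal → B.Normal →
        A ⊓ B = ⊥ → A ⊔ B = Gs i → A = ⊥ ∨ B = ⊥)
    (A B : Subgroup G) (hAn : A.Normal) (hBn : B.Normal)
    (hABinf : A ⊓ B = ⊥) (hABsup : A ⊔ B = ⊤) :
    ∃ σ : Equiv.Perm (Fin n), ∃ m : ℕ, m ≤ n ∧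
      A = (⨆ i ∈ {i : Fin n | (i : ℕ) < m}, Gs (σ i)) ∧
      B = (⨆ i ∈ {i : Fin n | m ≤ (i : ℕ)}, Gs (σ i)) := by
  have hfactor (i : Fin n) : Gs i ≤ A ∨ Gs i ≤ B := by
    set K : Subgroup G := ⨆ j ∈ ({i}ᶜ : Set (Fin n)), Gs j
    have : K.Normal := biSup_normal _ _ fun j _ => hnorm j
    have hKcent : K ≤ centralizer (Gs i) := iSup₂_le fun j hj x hx =>
      mem_centralizer_iff.mpr fun y hy => (hcomm i j (Ne.symm hj) y hy x hx).eq
    have hsup : Gs i ⊔ K = ⊤ := hgen ▸ (iSup_split_single Gs i).symm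
    exact le_or_le_of_inf_sup_inf_eq_self (hindec i).2 hABinf
      (inf_sup_inf_eq_self_of_sup_eq_top hZ (le_centralizer_iff.mp hKcent) hsup hABinf hABsup)
  obtain ⟨σ, m, hm, hσ⟩ := Fin.exists_perm_apply_iff_val_lt fun i => Gs i ≤ A
  set P := ⨆ i ∈ {i : Fin n | (i : ℕ) < m}, Gs (σ i)
  set Q := ⨆ i ∈ {i : Fin n | m ≤ (i : ℕ)}, Gs (σ i)
  have : P.Normal := biSup_normal _ _ fun i _ => hnorm (σ i)
  have : Q.Normal := biSup_normal _ _ fun i _ => hnorm (σ i)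
  have hPA : P ≤ A := iSup₂_le fun i hi => (hσ i).2 hi
  have hQB : Q ≤ B := iSup₂_le fun i hi =>
    (hfactor (σ i)).resolve_left fun h => (not_lt.2 hi) ((hσ i).1 h)
  have hPQ : P ⊔ Q = ⊤ := by
    have hsplit := iSup_split (fun i => Gs (σ i)) fun i : Fin n => (i : ℕ) < m
    simp only [σ.iSup_comp (g := Gs), hgen, not_lt] at hsplit
    exact hsplit.symm
  exact ⟨σ, m, hm, eq_of_le_of_le_of_sup_eq_top hPA hQB hPQ hABinf,
    eq_of_le_of_le_of_sup_eq_top hQB hPA ((sup_comm _ _).trans hPQ) ((inf_comm _ _).trans hABinf)⟩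

theorem prop2_unique_decomposition {G : Type*} [Group G]
    (hZ : Subgroup.center G = ⊥) (n : ℕ) (Gs : Fin n → Subgroup G)
    (hnorm : ∀ i, (Gs i).Normal)
    (hcomm : ∀ i j, i ≠ j → ∀ x ∈ Gs i, ∀ y ∈ Gs j, Commute x y)
    (hgen : (⨆ i, Gs i) = ⊤)
    (hdisj : ∀ i, Gs i ⊓ (⨆ j ∈ ({i}ᶜ : Set (Fin n)), Gs j) = ⊥)
    (hindec : ∀ i, Gs i ≠ ⊥ ∧
      ∀ A B : Subgroup G, A ≤ Gs i → B ≤ Gs i → A.Normal → B.Normal →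
        A ⊓ B = ⊥ → A ⊔ B = Gs i → A = ⊥ ∨ B = ⊥)
    (A B : Subgroup G) (hAn : A.Normal) (hBn : B.Normal)
    (hABcomm : ∀ x ∈ A, ∀ y ∈ B, Commute x y)
    (hABinf : A ⊓ B = ⊥) (hABsup : A ⊔ B = ⊤) :
    ∃ σ : Equiv.Perm (Fin n), ∃ m : ℕ, m ≤ n ∧
      A = (⨆ i ∈ {i : Fin n | (i : ℕ) < m}, Gs (σ i)) ∧
      B = (⨆ i ∈ {i : Fin n | m ≤ (i : ℕ)}, Gs (σ i)) :=
  prop2_unique_decomposition_general hZ n Gs hnorm hcomm hgen hindec A B hAn hBn hABinf hABsup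
end

section
/- Let G be a group, H = G/ζ^↑(G) its quotient by the hypercenter, and π : G → H the projection. If G = A × B is an internal direct product of subgroups, then H is the internal direct product of π(A) and π(B). -/
/-! Two elementwise commuting subgroups that generate a group centralize their intersection, so the
intersection lies in the centre. The images of `A` and `B` in `G ⧸ Z` still commute elementwise and
generate `G ⧸ Z`, whose centre is trivial; hence their intersection is trivial. -/

namespace Subgroup

variable {G H : Type*} [Group G] [Group H]

theorem commute_map_of_commute (f : G →* H) {A B : Subgroup G}
    (hcomm : ∀ x ∈ A, ∀ y ∈ B, Commute x y) :
    ∀ x ∈ A.map f, ∀ y ∈ B.map f, Commute x y := by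
  rintro _ ⟨a, ha, rfl⟩ _ ⟨b, hb, rfl⟩
  exact (hcomm a ha b hb).map f

theorem inf_le_center_of_commute_of_sup_eq_top {A B : Subgroup G}
    (hcomm : ∀ x ∈ A, ∀ y ∈ B, Commute x y) (hsup : A ⊔ B = ⊤) :
    A ⊓ B ≤ center G := by
  rintro x ⟨hxA, hxB⟩
  have hcentralizer : A ⊔ B ≤ centralizer {x} := by
    refine sup_le (fun a ha => ?_) (fun b hb => ?_) <;> rw [mem_centralizer_singleton_iff]
    · exact (hcomm a ha x hxB).eq
    · exact (hcomm x hxA b hb).eq.symm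
  rw [hsup] at hcentralizer
  exact mem_center_iff.mpr fun g => mem_centralizer_singleton_iff.mp (hcentralizer (mem_top g))

end Subgroup

theorem quotient_by_hypercenter_decomposition_general {G : Type*} [Group G]
    (Z : Subgroup G) (hZn : Z.Normal)
    (hZcenter : Subgroup.center (G ⧸ Z) = ⊥)
    (A B : Subgroup G)
    (hcomm : ∀ x ∈ A, ∀ y ∈ B, Commute x y)
    (hsup : A ⊔ B = ⊤) :
    (A.map (QuotientGroup.mk' Z)) ⊓ (B.map (QuotientGroup.mk' Z)) = ⊥ ∧
    (A.map (QuotientGroup.mk' Z)) ⊔ (B.map (QuotientGroup.mk' Z)) = ⊤ ∧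
    ∀ x ∈ A.map (QuotientGroup.mk' Z), ∀ y ∈ B.map (QuotientGroup.mk' Z), Commute x y := by
  have hcomm' := Subgroup.commute_map_of_commute (QuotientGroup.mk' Z) hcomm
  have hsup' : A.map (QuotientGroup.mk' Z) ⊔ B.map (QuotientGroup.mk' Z) = ⊤ := by
    rw [← Subgroup.map_sup, hsup, Subgroup.map_top_of_surjective _ (QuotientGroup.mk'_surjective Z)]
  refine ⟨?_, hsup', hcomm'⟩
  rw [eq_bot_iff, ← hZcenter]
  exact Subgroup.inf_le_center_of_commute_of_sup_eq_top hcomm' hsup'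

theorem quotient_by_hypercenter_decomposition {G : Type*} [Group G]
    (Z : Subgroup G) (hZn : Z.Normal)
    (hZcenter : Subgroup.center (G ⧸ Z) = ⊥)
    (hZmin : ∀ M : Subgroup G, ∀ _ : M.Normal, Subgroup.center (G ⧸ M) = ⊥ → Z ≤ M)
    (A B : Subgroup G) (hAn : A.Normal) (hBn : B.Normal)
    (hcomm : ∀ x ∈ A, ∀ y ∈ B, Commute x y)
    (hinf : A ⊓ B = ⊥) (hsup : A ⊔ B = ⊤) :
    (A.map (QuotientGroup.mk' Z)) ⊓ (B.map (QuotientGroup.mk' Z)) = ⊥ ∧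
    (A.map (QuotientGroup.mk' Z)) ⊔ (B.map (QuotientGroup.mk' Z)) = ⊤ ∧
    ∀ x ∈ A.map (QuotientGroup.mk' Z), ∀ y ∈ B.map (QuotientGroup.mk' Z), Commute x y :=
  quotient_by_hypercenter_decomposition_general Z hZn hZcenter A B hcomm hsup
end

section
/- If a group Γ admits a normal subgroup Γ' and quotient Γ'' = Γ/Γ' such that Γ' is n'-QM and Γ'' is n''-QM, then Γ is max(n',n'')-QM. -/
/-- A group `Γ` is `n`-QM if every nontrivial finitely generated subgroup has a
proper normal subgroup of index at most `n`. -/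
def IsQM (n : ℕ) (Γ : Type*) [Group Γ] : Prop :=
  ∀ Δ : Subgroup Γ, Δ.FG → Δ ≠ ⊥ →
    ∃ N : Subgroup Δ, N.Normal ∧ 1 < N.index ∧ N.index ≤ n

private lemma subgroup_fg_map {G H : Type*} [Group G] [Group H] {Δ : Subgroup G}
    (h : Δ.FG) (f : G →* H) : (Δ.map f).FG := by
  classical
  obtain ⟨S, hS⟩ := h
  exact ⟨S.image f, by rw [Finset.coe_image, ← MonoidHom.map_closure, hS]⟩

theorem qm_of_extension {Γ : Type*} [Group Γ] (n' n'' : ℕ)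
    (Γ' : Subgroup Γ) (hΓ'n : Γ'.Normal)
    (h' : IsQM n' Γ') (h'' : IsQM n'' (Γ ⧸ Γ')) :
    IsQM (max n' n'') Γ := by
  intro Δ hfg hne
  by_cases hle : Δ ≤ Γ'
  · -- Δ sits inside Γ'
    have e := Subgroup.subgroupOfEquivOfLe hle
    have hfgG : Group.FG ↥Δ := (Group.fg_iff_subgroup_fg Δ).mpr hfg
    have hfg' : (Δ.subgroupOf Γ').FG := by
      rw [← Group.fg_iff_subgroup_fg]
      exact Group.fg_of_surjective (f := e.symm.toMonoidHom) e.symm.surjective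
    have hne' : Δ.subgroupOf Γ' ≠ ⊥ := by
      intro h
      rw [Subgroup.subgroupOf_eq_bot] at h
      exact hne (le_bot_iff.mp fun x hx => h.le_bot ⟨hx, hle hx⟩)
    obtain ⟨N, hN, h1, h2⟩ := h' (Δ.subgroupOf Γ') hfg' hne'
    refine ⟨N.comap e.symm.toMonoidHom, hN.comap _, ?_, ?_⟩
    · rwa [Subgroup.index_comap_of_surjective _ e.symm.surjective]
    · rw [Subgroup.index_comap_of_surjective _ e.symm.surjective]
      exact h2.trans (le_max_left _ _)
  · -- the image of Δ in Γ ⧸ Γ' is nontrivial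
    set f := QuotientGroup.mk' Γ'
    have hfg'' : (Δ.map f).FG := subgroup_fg_map hfg f
    have hne'' : Δ.map f ≠ ⊥ := by
      intro h
      rw [Subgroup.map_eq_bot_iff, QuotientGroup.ker_mk'] at h
      exact hle h
    obtain ⟨N, hN, h1, h2⟩ := h'' (Δ.map f) hfg'' hne''
    have hsurj := f.subgroupMap_surjective Δ
    refine ⟨N.comap (f.subgroupMap Δ), hN.comap _, ?_, ?_⟩
    · rwa [Subgroup.index_comap_of_surjective _ hsurj]
    · rw [Subgroup.index_comap_of_surjective _ hsurj]
      exact h2.trans (le_max_right _ _)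
end

section
/- Let Γ be a group generated by g elements which decomposes as a direct product Γ = Γ₁ × ⋯ × Γ_m of nontrivial groups. If Γ is n-QM for some n ≥ 2, then m ≤ log₂(k_n(F_g)), where k_n(F_g) is the index in the free group F_g of the intersection of all its normal subgroups of index at most n. -/
/-- `Kn n G` is the intersection of all normal subgroups of `G` of (finite) index
at most `n`. -/
def Kn (n : ℕ) (G : Type*) [Group G] : Subgroup G :=
  ⨅ N ∈ {N : Subgroup G | N.Normal ∧ N.index ≠ 0 ∧ N.index ≤ n}, N

/-- `kn n G` is the index of `Kn n G` in `G`. -/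
noncomputable def kn (n : ℕ) (G : Type*) [Group G] : ℕ := (Kn n G).index

open Subgroup

theorem Subgroup.index_pi_univ {ι : Type*} [Fintype ι] {Γ : ι → Type*} [∀ i, Group (Γ i)]
    (H : ∀ i, Subgroup (Γ i)) : (pi Set.univ H).index = ∏ i, (H i).index := by
  simp_rw [index, ← Nat.card_pi]
  refine Nat.card_congr
    ((Quotient.congrRight fun x y ↦ ?_).trans (Setoid.piQuotientEquiv _).symm)
  rw [QuotientGroup.leftRel_pi]

theorem IsQM.exists_normal_of_injective {n : ℕ} {G H : Type*} [Group G] [Group H]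
    (hG : IsQM n G) [Group.FG H] [Nontrivial H] {ι : H →* G} (hι : Function.Injective ι) :
    ∃ N : Subgroup H, N.Normal ∧ 1 < N.index ∧ N.index ≤ n := by
  have hfg : ι.range.FG := (Group.fg_iff_subgroup_fg _).mp (Group.fg_range ι)
  have hne : ι.range ≠ ⊥ := by
    rw [Ne, MonoidHom.range_eq_bot_iff, ← MonoidHom.ker_eq_top_iff, ι.ker_eq_bot_iff.mpr hι]
    exact bot_ne_top
  obtain ⟨N, hN, h1, hn⟩ := hG _ hfg hne
  have hidx := index_comap_of_surjective N ι.rangeRestrict_surjective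
  exact ⟨N.comap ι.rangeRestrict, hN.comap _, hidx ▸ h1, hidx ▸ hn⟩

section Kn

variable {n : ℕ} {G Q : Type*} [Group G] [Group Q]

theorem Kn_le {N : Subgroup G} (hN : N.Normal) (h0 : N.index ≠ 0) (hn : N.index ≤ n) :
    Kn n G ≤ N :=
  biInf_le _ ⟨hN, h0, hn⟩

theorem Kn_le_comap_of_surjective {φ : G →* Q} (hφ : Function.Surjective φ) :
    Kn n G ≤ (Kn n Q).comap φ := by
  intro x hx
  simp only [Kn, mem_comap, mem_iInf]
  rintro N ⟨hN, h0, hn⟩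
  rw [← index_comap_of_surjective N hφ] at h0 hn
  exact Kn_le (hN.comap φ) h0 hn hx

theorem kn_dvd_of_surjective {φ : G →* Q} (hφ : Function.Surjective φ) :
    kn n Q ∣ kn n G := by
  have := index_dvd_of_le (Kn_le_comap_of_surjective (n := n) hφ)
  rwa [index_comap_of_surjective _ hφ] at this

theorem exists_hom_perm_ker_eq {N : Subgroup G} (hN : N.Normal) (h0 : N.index ≠ 0)
    (hn : N.index ≤ n) : ∃ φ : G →* Equiv.Perm (Fin n), φ.ker = N := by
  have : Finite (G ⧸ N) := Nat.finite_of_card_ne_zero h0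
  have : Fintype (G ⧸ N) := Fintype.ofFinite _
  have hcard : Fintype.card (G ⧸ N) ≤ n := by rwa [← Nat.card_eq_fintype_card]
  let e : G ⧸ N ↪ Fin n := (Fintype.equivFin _).toEmbedding.trans (Fin.castLEEmb hcard)
  refine ⟨(Equiv.Perm.viaEmbeddingHom e).comp (MulAction.toPermHom G (G ⧸ N)), ?_⟩
  rw [MonoidHom.ker_comp_of_injective _ _ (Equiv.Perm.viaEmbeddingHom_injective e),
    ← normalCore_eq_ker, normalCore_eq_self]

theorem iInf_ker_le_Kn : ⨅ φ : G →* Equiv.Perm (Fin n), φ.ker ≤ Kn n G := by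
  refine le_iInf₂ fun N ⟨hN, h0, hn⟩ => ?_
  obtain ⟨φ, rfl⟩ := exists_hom_perm_ker_eq hN h0 hn
  exact iInf_le _ φ

theorem kn_ne_zero_of_finite_hom [Finite (G →* Equiv.Perm (Fin n))] : kn n G ≠ 0 := by
  have : (⨅ φ : G →* Equiv.Perm (Fin n), φ.ker).FiniteIndex :=
    finiteIndex_iInf fun φ => ⟨by rw [index_ker]; exact Nat.card_pos.ne'⟩
  exact ne_zero_of_dvd_ne_zero FiniteIndex.index_ne_zero (index_dvd_of_le iInf_ker_le_Kn)

theorem kn_freeGroup_ne_zero (α : Type*) [Finite α] : kn n (FreeGroup α) ≠ 0 :=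
  have : Finite (FreeGroup α →* Equiv.Perm (Fin n)) := .of_equiv _ FreeGroup.lift
  kn_ne_zero_of_finite_hom

end Kn

theorem prod_index_dvd_kn_pi {n : ℕ} {ι : Type*} [Fintype ι] {Γ : ι → Type*}
    [∀ i, Group (Γ i)] (N : ∀ i, Subgroup (Γ i)) (hN : ∀ i, (N i).Normal)
    (h0 : ∀ i, (N i).index ≠ 0) (hn : ∀ i, (N i).index ≤ n) :
    ∏ i, (N i).index ∣ kn n (∀ i, Γ i) := by
  rw [← index_pi_univ]
  refine index_dvd_of_le fun x hx i _ => ?_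
  have hidx := index_comap_of_surjective (f := Pi.evalMonoidHom Γ i) (N i)
    (Function.surjective_eval i)
  exact Kn_le ((hN i).comap (Pi.evalMonoidHom Γ i)) (hidx ▸ h0 i) (hidx ▸ hn i) hx

theorem bound_on_direct_factors_general (g n m : ℕ)
    (Γ : Fin m → Type*) [∀ i, Group (Γ i)] (hnt : ∀ i, Nontrivial (Γ i))
    (f : Fin g → ∀ i, Γ i) (hgen : Subgroup.closure (Set.range f) = ⊤)
    (hQM : IsQM n (∀ i, Γ i)) :
    (m : ℝ) ≤ Real.logb 2 (kn n (FreeGroup (Fin g))) := by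
  have hπ : Function.Surjective (FreeGroup.lift f) := by
    rw [← MonoidHom.range_eq_top, FreeGroup.range_lift_eq_closure, hgen]
  have : Group.FG (∀ i, Γ i) := Group.fg_of_surjective hπ
  have hfactor (i : Fin m) : ∃ N : Subgroup (Γ i), N.Normal ∧ 1 < N.index ∧ N.index ≤ n :=
    have : Group.FG (Γ i) :=
      Group.fg_of_surjective (f := Pi.evalMonoidHom Γ i) (Function.surjective_eval i)
    hQM.exists_normal_of_injective (ι := MonoidHom.mulSingle Γ i) (Pi.mulSingle_injective i)
  choose N hN h1 hn using hfactor
  have hF := kn_freeGroup_ne_zero (n := n) (Fin g)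
  have hpow : 2 ^ m ≤ kn n (FreeGroup (Fin g)) :=
    calc 2 ^ m ≤ ∏ i, (N i).index := by
          simpa using Finset.pow_card_le_prod Finset.univ _ 2 fun i _ => h1 i
      _ ≤ kn n (FreeGroup (Fin g)) := Nat.le_of_dvd (Nat.pos_of_ne_zero hF)
          ((prod_index_dvd_kn_pi N hN (fun i => (zero_lt_one.trans (h1 i)).ne') hn).trans
            (kn_dvd_of_surjective hπ))
  rw [Real.le_logb_iff_rpow_le one_lt_two (by positivity), Real.rpow_natCast]
  exact_mod_cast hpow

theorem bound_on_direct_factors (g n m : ℕ) (hn : 2 ≤ n)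
    (Γ : Fin m → Type*) [∀ i, Group (Γ i)] (hnt : ∀ i, Nontrivial (Γ i))
    (f : Fin g → ∀ i, Γ i) (hgen : Subgroup.closure (Set.range f) = ⊤)
    (hQM : IsQM n (∀ i, Γ i)) :
    (m : ℝ) ≤ Real.logb 2 (kn n (FreeGroup (Fin g))) :=
  bound_on_direct_factors_general g n m Γ hnt f hgen hQM
end
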